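/- arXiv:0806.1132 — 2 statements merged into one kernel-verified Lean document; each statement's English description precedes it below -/
import Mathlib

section
/- Let μ ∈ (0,1) and q₁ ∈ (0,1], and set n = 1, A₂ = 0, M_b = 0 (classical photogravitational case). Define x* = −μ + q₁^{2/3}/2 and y* = ±√(q₁^{2/3} − q₁^{4/3}/4). Then y* ≠ 0, at the point (x*, y*) one has r₁ = q₁^{1/3} and r₂ = 1, and (x*, y*) is an equilibrium point: ∂Ω/∂x(x*, y*) = 0 and ∂Ω/∂y(x*, y*) = 0. These are the triangular equilibrium points L₄ and L₅. -/
/-!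
Writing `r₁, r₂` for the distances to the primaries, the gradient of `Ω` is
`(x - (1-μ) q₁ (x+μ)/r₁³ - μ (x+μ-1)/r₂³, y (1 - (1-μ) q₁/r₁³ - μ/r₂³))`.
Where `r₁³ = q₁` and `r₂ = 1` both components collapse to `0`.
With `r = q₁^{1/3}` the point `(-μ + r²/2, ±√(r² - r⁴/4))` lies at distance `r` from the first
primary and `1` from the second, and its ordinate is nonzero because `0 < r ≤ 1`.
-/

/-- Effective potential in the classical photogravitational case
(`n = 1`, `A₂ = 0`, `M_b = 0`). -/
noncomputable def OmegaC (μ q₁ x y : ℝ) : ℝ :=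
  (x ^ 2 + y ^ 2) / 2
    + (1 - μ) * q₁ / Real.sqrt ((x + μ) ^ 2 + y ^ 2)
    + μ / Real.sqrt ((x + μ - 1) ^ 2 + y ^ 2)

lemma hasDerivAt_const_div_sqrt (C : ℝ) {u : ℝ → ℝ} {u' x : ℝ}
    (hu : HasDerivAt u u' x) (hpos : 0 < u x) :
    HasDerivAt (fun t => C / √(u t)) (-(C * u') / (2 * √(u x) ^ 3)) x := by
  have hs : √(u x) ≠ 0 := by positivity
  refine ((hasDerivAt_const x C).div (hu.sqrt hpos.ne') hs).congr_deriv ?_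
  field_simp
  ring

section Partials

variable {μ q₁ x y : ℝ}

lemma hasDerivAt_omegaC_fst (h₁ : 0 < (x + μ) ^ 2 + y ^ 2) (h₂ : 0 < (x + μ - 1) ^ 2 + y ^ 2) :
    HasDerivAt (fun s => OmegaC μ q₁ s y)
      (x - (1 - μ) * q₁ * (x + μ) / √((x + μ) ^ 2 + y ^ 2) ^ 3
        - μ * (x + μ - 1) / √((x + μ - 1) ^ 2 + y ^ 2) ^ 3) x := by
  have hd₁ : HasDerivAt (fun s => (s + μ) ^ 2 + y ^ 2) (2 * (x + μ)) x := by
    simpa using (((hasDerivAt_id x).add_const μ).pow 2).add_const (y ^ 2)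
  have hd₂ : HasDerivAt (fun s => (s + μ - 1) ^ 2 + y ^ 2) (2 * (x + μ - 1)) x := by
    simpa using ((((hasDerivAt_id x).add_const μ).sub_const 1).pow 2).add_const (y ^ 2)
  have hd₀ : HasDerivAt (fun s => (s ^ 2 + y ^ 2) / 2) x x := by
    simpa using ((hasDerivAt_pow 2 x).add_const (y ^ 2)).div_const 2
  refine ((hd₀.add (hasDerivAt_const_div_sqrt ((1 - μ) * q₁) hd₁ h₁)).add
    (hasDerivAt_const_div_sqrt μ hd₂ h₂)).congr_deriv ?_
  ring

lemma hasDerivAt_omegaC_snd (h₁ : 0 < (x + μ) ^ 2 + y ^ 2) (h₂ : 0 < (x + μ - 1) ^ 2 + y ^ 2) :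
    HasDerivAt (fun t => OmegaC μ q₁ x t)
      (y * (1 - (1 - μ) * q₁ / √((x + μ) ^ 2 + y ^ 2) ^ 3
        - μ / √((x + μ - 1) ^ 2 + y ^ 2) ^ 3)) y := by
  have hd : ∀ c : ℝ, HasDerivAt (fun t => c + t ^ 2) (2 * y) y := fun c => by
    simpa using (hasDerivAt_pow 2 y).const_add c
  have hd₀ : HasDerivAt (fun t => (x ^ 2 + t ^ 2) / 2) y y := by
    simpa using (hd (x ^ 2)).div_const 2
  refine ((hd₀.add (hasDerivAt_const_div_sqrt ((1 - μ) * q₁) (hd _) h₁)).add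
    (hasDerivAt_const_div_sqrt μ (hd _) h₂)).congr_deriv ?_
  ring

theorem omegaC_partials_eq_zero (hq : 0 < q₁) (h₁ : √((x + μ) ^ 2 + y ^ 2) ^ 3 = q₁)
    (h₂ : √((x + μ - 1) ^ 2 + y ^ 2) = 1) :
    deriv (fun s => OmegaC μ q₁ s y) x = 0 ∧ deriv (fun t => OmegaC μ q₁ x t) y = 0 := by
  have hpos₁ : 0 < (x + μ) ^ 2 + y ^ 2 := by
    rw [← Real.sqrt_pos]
    exact (Odd.pow_pos_iff (by decide)).mp (h₁ ▸ hq)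
  have hpos₂ : 0 < (x + μ - 1) ^ 2 + y ^ 2 := by
    rw [← Real.sqrt_pos, h₂]
    exact one_pos
  rw [(hasDerivAt_omegaC_fst hpos₁ hpos₂).deriv, (hasDerivAt_omegaC_snd hpos₁ hpos₂).deriv,
    h₁, h₂]
  constructor <;> field_simp <;> ring

end Partials

theorem dist_triangular_point {μ r x y : ℝ} (hr : 0 ≤ r) (hx : x = -μ + r ^ 2 / 2)
    (hy : y ^ 2 = r ^ 2 - r ^ 4 / 4) :
    √((x + μ) ^ 2 + y ^ 2) = r ∧ √((x + μ - 1) ^ 2 + y ^ 2) = 1 := by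
  constructor
  · rw [show (x + μ) ^ 2 + y ^ 2 = r ^ 2 by rw [hx, hy]; ring, Real.sqrt_sq hr]
  · rw [show (x + μ - 1) ^ 2 + y ^ 2 = 1 by rw [hx, hy]; ring, Real.sqrt_one]

theorem triangular_points_are_equilibria_general
    (μ q₁ : ℝ) (hq0 : 0 < q₁) (hq1 : q₁ ≤ 1)
    (σ : ℝ) (hσ : σ = 1 ∨ σ = -1)
    (xs ys : ℝ)
    (hxs : xs = -μ + q₁ ^ ((2 : ℝ) / 3) / 2)
    (hys : ys = σ * Real.sqrt (q₁ ^ ((2 : ℝ) / 3) - q₁ ^ ((4 : ℝ) / 3) / 4)) :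
    ys ≠ 0 ∧
    Real.sqrt ((xs + μ) ^ 2 + ys ^ 2) = q₁ ^ ((1 : ℝ) / 3) ∧
    Real.sqrt ((xs + μ - 1) ^ 2 + ys ^ 2) = 1 ∧
    deriv (fun s => OmegaC μ q₁ s ys) xs = 0 ∧
    deriv (fun s => OmegaC μ q₁ xs s) ys = 0 := by
  set r := q₁ ^ ((1 : ℝ) / 3)
  have hr : 0 < r := Real.rpow_pos_of_pos hq0 _
  have hr1 : r ≤ 1 := Real.rpow_le_one hq0.le hq1 (by norm_num)
  have hpow : ∀ n : ℕ, q₁ ^ ((n : ℝ) / 3) = r ^ n := fun n => by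
    rw [← Real.rpow_mul_natCast hq0.le]
    ring_nf
  have hr2 : q₁ ^ ((2 : ℝ) / 3) = r ^ 2 := by exact_mod_cast hpow 2
  have hr3 : r ^ 3 = q₁ := by rw [← hpow 3]; norm_num
  have hr4 : q₁ ^ ((4 : ℝ) / 3) = r ^ 4 := by exact_mod_cast hpow 4
  have hxs' : xs = -μ + r ^ 2 / 2 := by rw [hxs, hr2]
  have hys2 : ys ^ 2 = r ^ 2 - r ^ 4 / 4 := by
    have hrad : 0 ≤ r ^ 2 - r ^ 4 / 4 := by nlinarith [pow_le_one₀ hr.le hr1 (n := 2)]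
    have hσ2 : σ ^ 2 = 1 := by rcases hσ with rfl | rfl <;> norm_num
    rw [hys, mul_pow, hσ2, one_mul, hr2, hr4, Real.sq_sqrt hrad]
  have hys0 : ys ≠ 0 := by
    rw [← pow_ne_zero_iff two_ne_zero, hys2]
    nlinarith [pow_le_one₀ hr.le hr1 (n := 2), pow_pos hr 2]
  obtain ⟨h₁, h₂⟩ := dist_triangular_point hr.le hxs' hys2
  exact ⟨hys0, h₁, h₂, omegaC_partials_eq_zero hq0 (by rw [h₁, hr3]) h₂⟩

/-- The triangular points `L₄`, `L₅`: with `x* = -μ + q₁^{2/3}/2` and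
`y* = ± √(q₁^{2/3} - q₁^{4/3}/4)` one has `y* ≠ 0`, `r₁ = q₁^{1/3}`, `r₂ = 1`,
and both partial derivatives of `Ω` vanish at `(x*, y*)`. -/
theorem triangular_points_are_equilibria
    (μ q₁ : ℝ) (hμ0 : 0 < μ) (hμ1 : μ < 1) (hq0 : 0 < q₁) (hq1 : q₁ ≤ 1)
    (σ : ℝ) (hσ : σ = 1 ∨ σ = -1)
    (xs ys : ℝ)
    (hxs : xs = -μ + q₁ ^ ((2 : ℝ) / 3) / 2)
    (hys : ys = σ * Real.sqrt (q₁ ^ ((2 : ℝ) / 3) - q₁ ^ ((4 : ℝ) / 3) / 4)) :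
    ys ≠ 0 ∧
    Real.sqrt ((xs + μ) ^ 2 + ys ^ 2) = q₁ ^ ((1 : ℝ) / 3) ∧
    Real.sqrt ((xs + μ - 1) ^ 2 + ys ^ 2) = 1 ∧
    deriv (fun s => OmegaC μ q₁ s ys) xs = 0 ∧
    deriv (fun s => OmegaC μ q₁ xs s) ys = 0 :=
  triangular_points_are_equilibria_general μ q₁ hq0 hq1 σ hσ xs ys hxs hys
end

section
/- Let μ ∈ (0,1) and q₁ ∈ (0,1], and set n = 1, A₂ = 0, M_b = 0 (classical photogravitational case). If (x, y) with y ≠ 0, r₁ ≠ 0, r₂ ≠ 0 satisfies the equilibrium equations ∂Ω/∂x(x,y) = 0 and ∂Ω/∂y(x,y) = 0, then necessarily r₁ = q₁^{1/3} and r₂ = 1; i.e., every non-collinear equilibrium point lies at distance q₁^{1/3} from the radiating primary and at distance 1 from the second primary. -/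
open Real

lemma hasDerivAt_const_div_sqrt_s4 (c : ℝ) {g : ℝ → ℝ} {g' x : ℝ} (hg : HasDerivAt g g' x)
    (hx : 0 < g x) :
    HasDerivAt (fun s => c / √(g s)) (-(c * g') / (2 * √(g x) ^ 3)) x := by
  have hs : √(g x) ≠ 0 := (sqrt_pos.mpr hx).ne'
  refine ((hasDerivAt_const x c).div (hg.sqrt hx.ne') hs).congr_deriv ?_
  field_simp
  ring

section OmegaC

variable (μ q₁ x y : ℝ)

lemma hasDerivAt_OmegaC_fst (h₁ : 0 < (x + μ) ^ 2 + y ^ 2)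
    (h₂ : 0 < (x + μ - 1) ^ 2 + y ^ 2) :
    HasDerivAt (fun s => OmegaC μ q₁ s y)
      (x - (1 - μ) * q₁ / √((x + μ) ^ 2 + y ^ 2) ^ 3 * (x + μ)
        - μ / √((x + μ - 1) ^ 2 + y ^ 2) ^ 3 * (x + μ - 1)) x := by
  have hd₁ : HasDerivAt (fun s => (s + μ) ^ 2 + y ^ 2) (2 * (x + μ)) x := by
    simpa using (((hasDerivAt_id x).add_const μ).pow 2).add_const (y ^ 2)
  have hd₂ : HasDerivAt (fun s => (s + μ - 1) ^ 2 + y ^ 2) (2 * (x + μ - 1)) x := by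
    simpa using ((((hasDerivAt_id x).add_const μ).sub_const 1).pow 2).add_const (y ^ 2)
  have hd₀ : HasDerivAt (fun s => (s ^ 2 + y ^ 2) / 2) x x := by
    simpa using ((hasDerivAt_pow 2 x).add_const (y ^ 2)).div_const 2
  refine ((hd₀.add (hasDerivAt_const_div_sqrt_s4 _ hd₁ h₁)).add
    (hasDerivAt_const_div_sqrt_s4 _ hd₂ h₂)).congr_deriv ?_
  ring

lemma hasDerivAt_OmegaC_snd (h₁ : 0 < (x + μ) ^ 2 + y ^ 2)
    (h₂ : 0 < (x + μ - 1) ^ 2 + y ^ 2) :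
    HasDerivAt (fun s => OmegaC μ q₁ x s)
      (y * (1 - (1 - μ) * q₁ / √((x + μ) ^ 2 + y ^ 2) ^ 3
        - μ / √((x + μ - 1) ^ 2 + y ^ 2) ^ 3)) y := by
  have hd : ∀ a : ℝ, HasDerivAt (fun s => a ^ 2 + s ^ 2) (2 * y) y := fun a => by
    simpa using (hasDerivAt_pow 2 y).const_add (a ^ 2)
  have hd₀ : HasDerivAt (fun s => (x ^ 2 + s ^ 2) / 2) y y := by
    simpa using (hd x).div_const 2
  refine ((hd₀.add (hasDerivAt_const_div_sqrt_s4 _ (hd _) h₁)).add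
    (hasDerivAt_const_div_sqrt_s4 _ (hd _) h₂)).congr_deriv ?_
  ring

end OmegaC

lemma weights_eq_of_equilibrium {μ x y A B : ℝ} (hy : y ≠ 0)
    (hx : x - A * (x + μ) - B * (x + μ - 1) = 0) (hy' : y * (1 - A - B) = 0) :
    A = 1 - μ ∧ B = μ := by
  have hsum : A + B = 1 := by linarith [(mul_eq_zero.mp hy').resolve_left hy]
  exact ⟨by linear_combination (1 - x - μ) * hsum - hx,
    by linear_combination hx + (x + μ) * hsum⟩

theorem noncollinear_equilibrium_distances_general
    (μ q₁ : ℝ) (hμ0 : 0 < μ) (hμ1 : μ < 1)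
    (x y : ℝ) (hy : y ≠ 0)
    (heqx : deriv (fun s => OmegaC μ q₁ s y) x = 0)
    (heqy : deriv (fun s => OmegaC μ q₁ x s) y = 0) :
    Real.sqrt ((x + μ) ^ 2 + y ^ 2) = q₁ ^ ((1 : ℝ) / 3) ∧
    Real.sqrt ((x + μ - 1) ^ 2 + y ^ 2) = 1 := by
  have h₁ : 0 < (x + μ) ^ 2 + y ^ 2 := by positivity
  have h₂ : 0 < (x + μ - 1) ^ 2 + y ^ 2 := by positivity
  rw [(hasDerivAt_OmegaC_fst μ q₁ x y h₁ h₂).deriv] at heqx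
  rw [(hasDerivAt_OmegaC_snd μ q₁ x y h₁ h₂).deriv] at heqy
  obtain ⟨hA, hB⟩ := weights_eq_of_equilibrium hy heqx heqy
  set r₁ := √((x + μ) ^ 2 + y ^ 2)
  set r₂ := √((x + μ - 1) ^ 2 + y ^ 2)
  have hr₁ : r₁ ^ 3 = q₁ := by
    have h := (div_eq_iff (by positivity)).mp hA
    exact (mul_left_cancel₀ (sub_ne_zero.mpr hμ1.ne') h).symm
  have hr₂ : r₂ ^ 3 = 1 :=
    (mul_eq_left₀ hμ0.ne').mp ((div_eq_iff (by positivity)).mp hB).symm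
  refine ⟨?_, (pow_eq_one_iff_of_nonneg (sqrt_nonneg _) three_ne_zero).mp hr₂⟩
  have h3 : (1 : ℝ) / 3 = ((3 : ℕ) : ℝ)⁻¹ := by norm_num
  rw [← hr₁, h3, pow_rpow_inv_natCast (sqrt_nonneg _) three_ne_zero]

/-- Every non-collinear (`y ≠ 0`) equilibrium point of the classical
photogravitational problem satisfies `r₁ = q₁^{1/3}` and `r₂ = 1`. -/
theorem noncollinear_equilibrium_distances
    (μ q₁ : ℝ) (hμ0 : 0 < μ) (hμ1 : μ < 1) (hq0 : 0 < q₁) (hq1 : q₁ ≤ 1)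
    (x y : ℝ) (hy : y ≠ 0)
    (hr1 : Real.sqrt ((x + μ) ^ 2 + y ^ 2) ≠ 0)
    (hr2 : Real.sqrt ((x + μ - 1) ^ 2 + y ^ 2) ≠ 0)
    (heqx : deriv (fun s => OmegaC μ q₁ s y) x = 0)
    (heqy : deriv (fun s => OmegaC μ q₁ x s) y = 0) :
    Real.sqrt ((x + μ) ^ 2 + y ^ 2) = q₁ ^ ((1 : ℝ) / 3) ∧
    Real.sqrt ((x + μ - 1) ^ 2 + y ^ 2) = 1 :=
  noncollinear_equilibrium_distances_general μ q₁ hμ0 hμ1 x y hy heqx heqy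
end
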